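/- Let q ≥ 2 be an integer. For all sufficiently large positive integers t the following holds: let M and N be disjoint finite sets with |M| = ⌈6 · q^{t+1} · log t⌉ and |N| = 2qt², where log denotes the logarithm to the base q. Then every colouring of the edges of the complete bipartite graph between M and N with q colours contains a monochromatic complete bipartite subgraph with at least 3qt² vertices in M and at least ⌈t - 2·log t⌉ vertices in N. -/

import Mathlib

open Finset Filter Real

/-!
Every vertex of `M` sends at least `|N| / q = 2t²` edges of one colour into `N`, so it is joined
monochromatically to at least `C(2t², s)` of the `q · C(2qt², s)` pairs (colour, `s`-subset of
`N`), where `s = ⌈t - 2 log_q t⌉`. Averaging gives a pair joined monochromatically to at least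
`|M| · C(2t², s) / (q · C(2qt², s))` vertices of `M`. The binomial ratio is at most
`(2qt²)^s / (2t² + 1 - s)^s ≤ 2 q^s` since `s ≤ t`, and `q^s t² ≤ q^(t+1)` by the choice of `s`,
so the pair has at least `3 t² log_q t / q ≥ 3qt²` vertices once `log_q t ≥ q²`.
-/

theorem exists_monochromatic_biclique {α β γ : Type*} [Fintype α] [Fintype β] [Fintype γ]
    [Nonempty γ] (c : α → β → γ) {d s k : ℕ}
    (hd : Fintype.card γ * d ≤ Fintype.card β) (hs : s ≤ Fintype.card β)
    (hk : k * (Fintype.card γ * (Fintype.card β).choose s) ≤ Fintype.card α * d.choose s) :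
    ∃ i, ∃ M' : Finset α, ∃ N' : Finset β,
      k ≤ #M' ∧ #N' = s ∧ ∀ a ∈ M', ∀ b ∈ N', c a b = i := by
  classical
  set P : Finset (γ × Finset β) := univ ×ˢ powersetCard s univ
  let r : α → γ × Finset β → Prop := fun a p => ∀ b ∈ p.2, c a b = p.1
  have hPcard : #P = Fintype.card γ * (Fintype.card β).choose s := by simp [P]
  have hPne : P.Nonempty := by simpa [P] using hs
  have habove (a : α) : d.choose s ≤ #(P.bipartiteAbove r a) := by
    obtain ⟨i, hi⟩ := Fintype.exists_le_card_fiber_of_mul_le_card (c a) hd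
    calc d.choose s ≤ #({i} ×ˢ powersetCard s {b | c a b = i}) := by
          simpa using Nat.choose_le_choose s hi
      _ ≤ #(P.bipartiteAbove r a) := card_le_card fun p hp => by
          simp only [mem_product, mem_singleton, mem_powersetCard] at hp
          obtain ⟨rfl, hsub, hcard⟩ := hp
          simp only [mem_bipartiteAbove, P, r, mem_product, mem_powersetCard]
          exact ⟨⟨mem_univ _, subset_univ _, hcard⟩, fun b hb => (mem_filter.1 (hsub hb)).2⟩
  have hsum : ∑ _p ∈ P, k ≤ ∑ p ∈ P, #(univ.bipartiteBelow r p) := by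
    rw [← sum_card_bipartiteAbove_eq_sum_card_bipartiteBelow, sum_const, hPcard, smul_eq_mul]
    calc Fintype.card γ * (Fintype.card β).choose s * k ≤ Fintype.card α * d.choose s := by
          linarith
      _ ≤ ∑ a, #(P.bipartiteAbove r a) := by
          simpa using sum_le_sum fun a (_ : a ∈ univ) => habove a
  obtain ⟨⟨i, N'⟩, hp, hkM⟩ := exists_le_of_sum_le hPne hsum
  exact ⟨i, univ.bipartiteBelow r (i, N'), N', hkM, (mem_powersetCard.1 (mem_product.1 hp).2).2,
    fun a ha => (mem_bipartiteBelow r |>.1 ha).2⟩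

theorem Nat.choose_mul_pow_le_pow_mul_choose (n d s : ℕ) :
    n.choose s * (d + 1 - s) ^ s ≤ n ^ s * d.choose s := by
  have h := Nat.mul_le_mul (n.descFactorial_le_pow s) (d.pow_sub_le_descFactorial s)
  rw [Nat.descFactorial_eq_factorial_mul_choose, Nat.descFactorial_eq_factorial_mul_choose] at h
  refine Nat.le_of_mul_le_mul_left ?_ s.factorial_pos
  linarith

theorem Nat.mul_choose_le_mul_choose_of_mul_pow_le {n d s k m : ℕ} (hs : s ≤ d)
    (h : k * n ^ s ≤ m * (d + 1 - s) ^ s) : k * n.choose s ≤ m * d.choose s := by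
  refine Nat.le_of_mul_le_mul_right ?_ (pow_pos (by omega : 0 < d + 1 - s) s)
  calc k * n.choose s * (d + 1 - s) ^ s ≤ k * (n ^ s * d.choose s) := by
        rw [mul_assoc]; exact Nat.mul_le_mul_left k (n.choose_mul_pow_le_pow_mul_choose d s)
    _ ≤ m * (d + 1 - s) ^ s * d.choose s := by rw [← mul_assoc]; exact Nat.mul_le_mul_right _ h
    _ = m * d.choose s * (d + 1 - s) ^ s := by ring

theorem pow_le_two_mul_sub_pow {x : ℝ} {n : ℕ} (h : 2 * n ^ 2 ≤ x) : x ^ n ≤ 2 * (x - n) ^ n := by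
  rcases n.eq_zero_or_pos with rfl | hn
  · norm_num
  have hn1 : (1 : ℝ) ≤ n := by exact_mod_cast hn
  have hx : 0 < x := by nlinarith
  have hsq : (n : ℝ) ^ 2 / x ≤ 1 / 2 := by rw [div_le_iff₀ hx]; linarith
  have hlin : (n : ℝ) / x ≤ n ^ 2 / x := by gcongr; nlinarith
  have bernoulli := one_add_mul_le_pow (a := -(n / x)) (by linarith) n
  have hsub : x - n = x * (1 + -(n / x)) := by field_simp; ring
  calc x ^ n = 2 * (x ^ n * (1 / 2)) := by ring
    _ ≤ 2 * (x ^ n * (1 + n * -(n / x))) := by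
        gcongr; rw [mul_neg, ← mul_div_assoc, ← sq]; linarith
    _ ≤ 2 * (x - n) ^ n := by rw [hsub, mul_pow]; gcongr

theorem eventually_sq_le_logb_and_two_mul_logb_le {b : ℝ} (hb : 1 < b) :
    ∀ᶠ t : ℕ in atTop, b ^ 2 ≤ logb b t ∧ 2 * logb b t ≤ t := by
  have hlogb : 0 < log b := log_pos hb
  refine (tendsto_natCast_atTop_atTop.eventually
    (((tendsto_logb_atTop hb).eventually_ge_atTop (b ^ 2)).and
      (isLittleO_log_id_atTop.bound (half_pos hlogb)))).mono fun t ⟨hL, hlog⟩ => ⟨hL, ?_⟩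
  simp only [norm_eq_abs, id, Nat.abs_cast] at hlog
  rw [logb, ← mul_div_assoc, div_le_iff₀ hlogb]
  linarith [le_abs_self (log t)]

theorem pow_ceil_sub_two_mul_logb_mul_sq_le {b : ℝ} (hb : 1 < b) {t : ℕ}
    (h : 2 * logb b t ≤ t) : b ^ ⌈(t : ℝ) - 2 * logb b t⌉₊ * (t : ℝ) ^ 2 ≤ b ^ (t + 1) := by
  have hb0 : 0 < b := by linarith
  rcases t.eq_zero_or_pos with rfl | ht
  · simp [hb0.le]
  have hs : (⌈(t : ℝ) - 2 * logb b t⌉₊ : ℝ) ≤ t + 1 - 2 * logb b t := by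
    linarith [Nat.ceil_lt_add_one (by linarith : 0 ≤ (t : ℝ) - 2 * logb b t)]
  have hsq : b ^ (2 * logb b t) = (t : ℝ) ^ 2 := by
    rw [mul_comm, rpow_mul hb0.le, rpow_logb hb0 hb.ne' (by positivity), rpow_two]
  calc b ^ ⌈(t : ℝ) - 2 * logb b t⌉₊ * (t : ℝ) ^ 2
      ≤ b ^ ((t : ℝ) + 1 - 2 * logb b t) * b ^ (2 * logb b t) := by
        rw [← rpow_natCast, hsq]; gcongr; exact hb.le
    _ = b ^ (t + 1) := by rw [← rpow_add hb0, ← rpow_natCast]; push_cast; ring_nf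

theorem three_mul_sq_mul_pow_le_mul_pow {q t s m : ℕ} {L : ℝ} (hst : s ≤ t)
    (hqs : (q : ℝ) ^ s * (t : ℝ) ^ 2 ≤ (q : ℝ) ^ (t + 1)) (hqL : (q : ℝ) ^ 2 ≤ L)
    (hm : 6 * (q : ℝ) ^ (t + 1) * L ≤ m) :
    3 * q * t ^ 2 * q * (2 * q * t ^ 2) ^ s ≤ m * (2 * t ^ 2 + 1 - s) ^ s := by
  have hs : (s : ℝ) ≤ t := by exact_mod_cast hst
  have hs2 : (s : ℝ) ≤ 2 * t ^ 2 := by exact_mod_cast hst.trans (by nlinarith)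
  have hL : 0 ≤ L := le_trans (by positivity) hqL
  have hbern : ((2 : ℝ) * t ^ 2) ^ s ≤ 2 * (2 * t ^ 2 + 1 - s) ^ s := by
    refine (pow_le_two_mul_sub_pow (by gcongr)).trans ?_
    gcongr
    linarith
  rw [← Nat.cast_le (α := ℝ)]
  push_cast [Nat.cast_sub (by nlinarith : s ≤ 2 * t ^ 2 + 1)]
  calc 3 * (q : ℝ) * t ^ 2 * q * (2 * q * t ^ 2) ^ s
      = 3 * q ^ 2 * (q ^ s * t ^ 2) * (2 * t ^ 2) ^ s := by ring
    _ ≤ 3 * L * q ^ (t + 1) * (2 * (2 * t ^ 2 + 1 - s) ^ s) := by gcongr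
    _ = 6 * q ^ (t + 1) * L * (2 * t ^ 2 + 1 - s) ^ s := by ring
    _ ≤ m * (2 * t ^ 2 + 1 - s) ^ s := by gcongr; exact pow_nonneg (by linarith) s

/-- For `q ≥ 2` and all sufficiently large `t`: every `q`-colouring of the complete
bipartite graph between a set `M` of size `⌈6 q^{t+1} log_q t⌉` and a set `N` of size
`2 q t²` contains a monochromatic complete bipartite subgraph with at least `3 q t²`
vertices in `M` and at least `⌈t - 2 log_q t⌉` vertices in `N`. -/
theorem mono_complete_bipartite_first_phase (q : ℕ) (hq : 2 ≤ q) :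
    ∃ t₀ : ℕ, ∀ t : ℕ, t₀ ≤ t →
      ∀ c : Fin ⌈6 * (q : ℝ) ^ (t + 1) * Real.logb q t⌉₊ → Fin (2 * q * t ^ 2) → Fin q,
        ∃ i : Fin q,
          ∃ M' : Finset (Fin ⌈6 * (q : ℝ) ^ (t + 1) * Real.logb q t⌉₊),
            ∃ N' : Finset (Fin (2 * q * t ^ 2)),
              3 * q * t ^ 2 ≤ M'.card ∧
              ⌈(t : ℝ) - 2 * Real.logb q t⌉₊ ≤ N'.card ∧
              ∀ a ∈ M', ∀ b ∈ N', c a b = i := by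
  have hq1 : (1 : ℝ) < q := by exact_mod_cast hq
  have : Nonempty (Fin q) := ⟨⟨0, by omega⟩⟩
  obtain ⟨t₀, ht₀⟩ := eventually_atTop.1 (eventually_sq_le_logb_and_two_mul_logb_le hq1)
  refine ⟨t₀, fun t ht c => ?_⟩
  obtain ⟨hqL, h2L⟩ := ht₀ t ht
  set s := ⌈(t : ℝ) - 2 * logb q t⌉₊
  have hst : s ≤ t := Nat.ceil_le.2 (by nlinarith)
  have hsd : s ≤ 2 * t ^ 2 := hst.trans (by nlinarith)
  have hk := Nat.mul_choose_le_mul_choose_of_mul_pow_le (n := 2 * q * t ^ 2) hsd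
    (three_mul_sq_mul_pow_le_mul_pow hst (pow_ceil_sub_two_mul_logb_mul_sq_le hq1 h2L) hqL
      (Nat.le_ceil _))
  obtain ⟨i, M', N', hM', hN', hc⟩ := exists_monochromatic_biclique c (d := 2 * t ^ 2) (s := s)
    (by simp [mul_assoc, mul_left_comm]) (by simpa using hsd.trans (by nlinarith))
    (by simpa only [Fintype.card_fin, ← mul_assoc] using hk)
  exact ⟨i, M', N', hM', hN'.ge, hc⟩
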